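/- Convexity of the outer bound region (part of Theorem 2). For any discrete memoryless broadcast channel Q and any L₁, L₂ ≥ 0, the region R_O(L₁,L₂) — defined as the closure of the union, over all finite sets 𝒲, 𝒰, 𝒱 and all joint PMFs of the form P_{W,U,V} P_{X|U,V} Q (so that (Y₁,Y₂) − X − (U,V) − W is Markov), of the set of triples (R₀,R₁,R₂) ∈ ℝ₊³ satisfying R₀ ≤ min{I(W;Y₁), I(W;Y₂)}; R₁ ≤ I(U;Y₁|W,V) − I(U;Y₂|W,V) + L₁; R₁ ≤ I(U;Y₁|W) − I(U;Y₂|W) + L₁; R₀+R₁ ≤ I(U;Y₁|W) + min{I(W;Y₁), I(W;Y₂)}; R₂ ≤ I(V;Y₂|W,U) − I(V;Y₁|W,U) + L₂; R₂ ≤ I(V;Y₂|W) − I(V;Y₁|W) + L₂; R₀+R₂ ≤ I(V;Y₂|W) + min{I(W;Y₁), I(W;Y₂)}; R₀+R₁+R₂ ≤ I(U;Y₁|W,V) + I(V;Y₂|W) + min{I(W;Y₁), I(W;Y₂)}; R₀+R₁+R₂ ≤ I(U;Y₁|W) + I(V;Y₂|W,U) + min{I(W;Y₁), I(W;Y₂)}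 — is a convex subset of ℝ³. -/
import Mathlib


open scoped Classical BigOperators

noncomputable section

/-- Entropy (base 2) of a finitely supported distribution given as a function. -/
def entFun {α : Type} [Fintype α] (q : α → ℝ) : ℝ :=
  -∑ a, q a * Real.logb 2 (q a)

/-- Distribution (pushforward) of the random variable `A` under the pmf `p`. -/
def distOf {Ω α : Type} [Fintype Ω] [Fintype α] (p : Ω → ℝ) (A : Ω → α) : α → ℝ :=
  fun a => ∑ ω, if A ω = a then p ω else 0

/-- Shannon entropy `H(A)` (base 2). -/
def Hent {Ω α : Type} [Fintype Ω] [Fintype α] (p : Ω → ℝ) (A : Ω → α) : ℝ :=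
  entFun (distOf p A)

/-- Conditional entropy `H(A|B)`. -/
def CHent {Ω α β : Type} [Fintype Ω] [Fintype α] [Fintype β]
    (p : Ω → ℝ) (A : Ω → α) (B : Ω → β) : ℝ :=
  Hent p (fun ω => (A ω, B ω)) - Hent p B

/-- Mutual information `I(A;B)`. -/
def MI {Ω α β : Type} [Fintype Ω] [Fintype α] [Fintype β]
    (p : Ω → ℝ) (A : Ω → α) (B : Ω → β) : ℝ :=
  Hent p A + Hent p B - Hent p (fun ω => (A ω, B ω))

/-- Conditional mutual information `I(A;B|C)`. -/
def CMI {Ω α β γ : Type} [Fintype Ω] [Fintype α] [Fintype β] [Fintype γ]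
    (p : Ω → ℝ) (A : Ω → α) (B : Ω → β) (C : Ω → γ) : ℝ :=
  Hent p (fun ω => (A ω, C ω)) + Hent p (fun ω => (B ω, C ω))
    - Hent p (fun ω => (A ω, B ω, C ω)) - Hent p C

/-- `p` is a probability mass function on the finite type `α`. -/
def IsPMF {α : Type} [Fintype α] (p : α → ℝ) : Prop :=
  (∀ a, 0 ≤ p a) ∧ ∑ a, p a = 1

/-- `A` and `B` are conditionally independent given `C` (under the pmf `p`). -/
def CondIndep {Ω α β γ : Type} [Fintype Ω] [Fintype α] [Fintype β] [Fintype γ]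
    (p : Ω → ℝ) (A : Ω → α) (B : Ω → β) (C : Ω → γ) : Prop :=
  ∀ a b c,
    distOf p (fun ω => (A ω, B ω, C ω)) (a, b, c) * distOf p C c
      = distOf p (fun ω => (A ω, C ω)) (a, c) * distOf p (fun ω => (B ω, C ω)) (b, c)

-- negative mul logb
def nml (x : ℝ) : ℝ := -(x * Real.logb 2 x)

lemma nml_zero : nml 0 = 0 := by simp [nml]

lemma nml_mul (a x : ℝ) : nml (a * x) = a * nml x + x * nml a := by
  rcases eq_or_ne a 0 with rfl | ha
  · simp [nml]
  rcases eq_or_ne x 0 with rfl | hx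
  · simp [nml]
  unfold nml
  rw [Real.logb, Real.logb, Real.logb, Real.log_mul ha hx]
  ring

lemma entFun_eq_sum_nml {α : Type} [Fintype α] (q : α → ℝ) :
    entFun q = ∑ a, nml (q a) := by
  simp [entFun, nml, Finset.sum_neg_distrib]

lemma nml_concave {x y l m : ℝ} (hx : 0 ≤ x) (hy : 0 ≤ y) (hl : 0 ≤ l) (hm : 0 ≤ m)
    (hlm : l + m = 1) : l * nml x + m * nml y ≤ nml (l * x + m * y) := by
  have h := Real.concaveOn_negMulLog.2 (Set.mem_Ici.2 hx) (Set.mem_Ici.2 hy) hl hm hlm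
  have hlog2 : (0:ℝ) < Real.log 2 := Real.log_pos (by norm_num)
  have e : ∀ t : ℝ, nml t = Real.negMulLog t / Real.log 2 := by
    intro t; simp [nml, Real.negMulLog, Real.logb]; ring
  have h' : l * Real.negMulLog x + m * Real.negMulLog y ≤ Real.negMulLog (l*x+m*y) := by
    simpa [smul_eq_mul] using h
  rw [e, e, e]
  calc l * (Real.negMulLog x / Real.log 2) + m * (Real.negMulLog y / Real.log 2)
      = (l * Real.negMulLog x + m * Real.negMulLog y) / Real.log 2 := by ring
    _ ≤ Real.negMulLog (l * x + m * y) / Real.log 2 := by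
        gcongr

lemma distOf_nonneg {Ω α : Type} [Fintype Ω] [Fintype α] {p : Ω → ℝ}
    (hp : ∀ ω, 0 ≤ p ω) (A : Ω → α) (a : α) : 0 ≤ distOf p A a := by
  apply Finset.sum_nonneg; intro ω _; split <;> simp [hp ω]

lemma sum_distOf {Ω α : Type} [Fintype Ω] [Fintype α] (p : Ω → ℝ) (A : Ω → α) :
    ∑ a, distOf p A a = ∑ ω, p ω := by
  unfold distOf
  rw [Finset.sum_comm]
  simp

lemma distOf_comp {Ω Ω' α : Type} [Fintype Ω] [Fintype Ω'] [Fintype α]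
    (p : Ω → ℝ) (f : Ω → Ω') (A : Ω' → α) (a : α) :
    distOf (distOf p f) A a = distOf p (fun ω => A (f ω)) a := by
  unfold distOf
  have h1 : ∀ ω' : Ω', (if A ω' = a then ∑ ω, if f ω = ω' then p ω else 0 else 0)
      = ∑ ω, if f ω = ω' ∧ A ω' = a then p ω else 0 := by
    intro ω'; split
    · next h => exact Finset.sum_congr rfl fun ω _ => by simp [h]
    · next h => exact (Finset.sum_eq_zero fun ω _ => by simp [h]).symm
  rw [Finset.sum_congr rfl fun ω' _ => h1 ω', Finset.sum_comm]
  congr 1; funext ω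
  simp [ite_and, Finset.sum_ite_eq]

lemma distOf_eq_zero {Ω α : Type} [Fintype Ω] [Fintype α] (p : Ω → ℝ) (A : Ω → α)
    (a : α) (h : ∀ ω, A ω ≠ a) : distOf p A a = 0 := by
  apply Finset.sum_eq_zero; intro ω _; exact if_neg (h ω)

lemma distOf_comp_inj {Ω α β : Type} [Fintype Ω] [Fintype α] [Fintype β]
    (p : Ω → ℝ) (A : Ω → α) {ι : α → β} (hι : Function.Injective ι) (a : α) :
    distOf p (fun ω => ι (A ω)) (ι a) = distOf p A a := by
  unfold distOf; congr 1; funext ω; simp [hι.eq_iff]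

lemma Hent_comp_inj {Ω α β : Type} [Fintype Ω] [Fintype α] [Fintype β]
    (p : Ω → ℝ) (A : Ω → α) {ι : α → β} (hι : Function.Injective ι) :
    Hent p (fun ω => ι (A ω)) = Hent p A := by
  unfold Hent
  rw [entFun_eq_sum_nml, entFun_eq_sum_nml]
  have h0 : ∀ b ∈ Finset.univ, b ∉ Finset.univ.image ι →
      nml (distOf p (fun ω => ι (A ω)) b) = 0 := by
    intro b _ hb
    rw [distOf_eq_zero, nml_zero]
    intro ω h; exact hb (Finset.mem_image.2 ⟨A ω, Finset.mem_univ _, h⟩)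
  rw [← Finset.sum_subset (Finset.subset_univ _) h0,
    Finset.sum_image (fun a _ b _ h => hι h)]
  exact Finset.sum_congr rfl fun a _ => by rw [distOf_comp_inj p A hι]


lemma entFun_mix {α : Type} [Fintype α] (d₁ d₂ : α → ℝ)
    (s₁ : ∑ a, d₁ a = 1) (s₂ : ∑ a, d₂ a = 1)
    (hd : ∀ a, d₁ a = 0 ∨ d₂ a = 0) (l m : ℝ) :
    entFun (fun a => l * d₁ a + m * d₂ a)
      = l * entFun d₁ + m * entFun d₂ + nml l + nml m := by
  rw [entFun_eq_sum_nml, entFun_eq_sum_nml, entFun_eq_sum_nml]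
  have key : ∀ a, nml (l * d₁ a + m * d₂ a)
      = l * nml (d₁ a) + m * nml (d₂ a) + d₁ a * nml l + d₂ a * nml m := by
    intro a
    rcases hd a with h | h <;> rw [h] <;> simp [nml_zero, nml_mul] <;> ring
  rw [Finset.sum_congr rfl fun a _ => key a]
  rw [Finset.sum_add_distrib, Finset.sum_add_distrib, Finset.sum_add_distrib,
    ← Finset.mul_sum, ← Finset.mul_sum, ← Finset.sum_mul, ← Finset.sum_mul, s₁, s₂]
  ring

lemma entFun_mix_ge {α : Type} [Fintype α] (d₁ d₂ : α → ℝ)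
    (h₁ : ∀ a, 0 ≤ d₁ a) (h₂ : ∀ a, 0 ≤ d₂ a) {l m : ℝ}
    (hl : 0 ≤ l) (hm : 0 ≤ m) (hlm : l + m = 1) :
    l * entFun d₁ + m * entFun d₂ ≤ entFun (fun a => l * d₁ a + m * d₂ a) := by
  rw [entFun_eq_sum_nml, entFun_eq_sum_nml, entFun_eq_sum_nml, Finset.mul_sum, Finset.mul_sum,
    ← Finset.sum_add_distrib]
  exact Finset.sum_le_sum fun a _ => nml_concave (h₁ a) (h₂ a) hl hm hlm

lemma distOf_add {Ω α : Type} [Fintype Ω] [Fintype α] (g h : Ω → ℝ) (A : Ω → α) (a : α) :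
    distOf (fun ω => g ω + h ω) A a = distOf g A a + distOf h A a := by
  unfold distOf
  rw [← Finset.sum_add_distrib]
  congr 1; funext ω
  split <;> simp

lemma distOf_smul {Ω α : Type} [Fintype Ω] [Fintype α] (c : ℝ) (g : Ω → ℝ) (A : Ω → α) (a : α) :
    distOf (fun ω => c * g ω) A a = c * distOf g A a := by
  unfold distOf
  rw [Finset.mul_sum]
  congr 1; funext ω
  split <;> simp

lemma distOf_mix {Ω₁ Ω₂ Ω α : Type} [Fintype Ω₁] [Fintype Ω₂] [Fintype Ω] [Fintype α]
    (q₁ : Ω₁ → ℝ) (q₂ : Ω₂ → ℝ) (e : Ω₁ → Ω) (f : Ω₂ → Ω) (l m : ℝ)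
    (A : Ω → α) (a : α) :
    distOf (fun ω => l * distOf q₁ e ω + m * distOf q₂ f ω) A a
      = l * distOf q₁ (fun ω => A (e ω)) a + m * distOf q₂ (fun ω => A (f ω)) a := by
  rw [distOf_add, distOf_smul, distOf_smul, distOf_comp, distOf_comp]

lemma castAdd_ne_natAdd {m n : ℕ} (i : Fin m) (j : Fin n) :
    Fin.castAdd n i ≠ Fin.natAdd m j := by
  intro h
  have h2 := congrArg Fin.val h
  simp at h2
  have := i.isLt
  omega

lemma natAdd_injective (m n : ℕ) :
    Function.Injective (Fin.natAdd m : Fin n → Fin (m+n)) := by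
  intro a b h
  have h2 := congrArg Fin.val h
  simp at h2
  exact Fin.ext h2

lemma fin_add_cases {m n : ℕ} (i : Fin (m+n)) :
    (∃ j : Fin m, i = Fin.castAdd n j) ∨ ∃ j : Fin n, i = Fin.natAdd m j := by
  by_cases h : (i : ℕ) < m
  · exact Or.inl ⟨⟨i, h⟩, Fin.ext rfl⟩
  · refine Or.inr ⟨⟨(i : ℕ) - m, by have := i.isLt; omega⟩, Fin.ext ?_⟩
    simp [Fin.natAdd]
    omega

lemma distOf_prod_channel {X Y1 Y2 : Type} [Fintype X] [Fintype Y1] [Fintype Y2]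
    {k1 k2 k3 n1 n2 n3 : ℕ} (Q : X → Y1 → Y2 → ℝ)
    (Pq : Fin k1 × Fin k2 × Fin k3 × X → ℝ)
    (f1 : Fin k1 → Fin n1) (f2 : Fin k2 → Fin n2) (f3 : Fin k3 → Fin n3)
    (w : Fin n1) (u : Fin n2) (v : Fin n3) (x : X) (y1 : Y1) (y2 : Y2) :
    distOf (fun ω : Fin k1 × Fin k2 × Fin k3 × X × Y1 × Y2 =>
        Pq (ω.1, ω.2.1, ω.2.2.1, ω.2.2.2.1) * Q ω.2.2.2.1 ω.2.2.2.2.1 ω.2.2.2.2.2)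
      (fun ω => (f1 ω.1, f2 ω.2.1, f3 ω.2.2.1, ω.2.2.2.1, ω.2.2.2.2.1, ω.2.2.2.2.2))
      (w, u, v, x, y1, y2)
    = distOf Pq (fun z => (f1 z.1, f2 z.2.1, f3 z.2.2.1, z.2.2.2)) (w, u, v, x) * Q x y1 y2 := by
  unfold distOf
  rw [Finset.sum_mul]
  simp [Fintype.sum_prod_type, Prod.mk.injEq, ite_and, Finset.sum_ite_eq',
    ite_mul, zero_mul]

lemma sum_prod_channel {X Y1 Y2 : Type} [Fintype X] [Fintype Y1] [Fintype Y2]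
    {k1 k2 k3 : ℕ} (Q : X → Y1 → Y2 → ℝ) (hQ : ∀ x, ∑ y1, ∑ y2, Q x y1 y2 = 1)
    (Pq : Fin k1 × Fin k2 × Fin k3 × X → ℝ) (hP : ∑ z, Pq z = 1) :
    ∑ ω : Fin k1 × Fin k2 × Fin k3 × X × Y1 × Y2,
      Pq (ω.1, ω.2.1, ω.2.2.1, ω.2.2.2.1) * Q ω.2.2.2.1 ω.2.2.2.2.1 ω.2.2.2.2.2 = 1 := by
  rw [← hP]
  rw [Fintype.sum_prod_type (f := fun z : Fin k1 × Fin k2 × Fin k3 × X => Pq z)]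
  simp only [Fintype.sum_prod_type]
  refine Finset.sum_congr rfl fun a _ => Finset.sum_congr rfl fun b _ =>
    Finset.sum_congr rfl fun c _ => Finset.sum_congr rfl fun x _ => ?_
  rw [show (∑ y1, ∑ y2, Pq (a, b, c, x) * Q x y1 y2)
      = Pq (a, b, c, x) * ∑ y1, ∑ y2, Q x y1 y2 by
    rw [Finset.mul_sum]; exact Finset.sum_congr rfl fun y1 _ => by rw [Finset.mul_sum]]
  rw [hQ x, mul_one]



section MixLemmas

variable {Ω₁ Ω₂ Ω : Type} [Fintype Ω₁] [Fintype Ω₂] [Fintype Ω]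
  {p : Ω → ℝ} {p₁ : Ω₁ → ℝ} {p₂ : Ω₂ → ℝ} {e₁ : Ω₁ → Ω} {e₂ : Ω₂ → Ω} {l m : ℝ}

lemma distOf_mix_eq (hp : ∀ ω, p ω = l * distOf p₁ e₁ ω + m * distOf p₂ e₂ ω)
    {α : Type} [Fintype α] (A : Ω → α) (a : α) :
    distOf p A a = l * distOf p₁ (fun ω => A (e₁ ω)) a + m * distOf p₂ (fun ω => A (e₂ ω)) a := by
  have hp' : p = fun ω => l * distOf p₁ e₁ ω + m * distOf p₂ e₂ ω := funext hp
  rw [hp', distOf_mix]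

lemma Hent_mix_eq (hp : ∀ ω, p ω = l * distOf p₁ e₁ ω + m * distOf p₂ e₂ ω)
    (hs₁ : ∑ ω, p₁ ω = 1) (hs₂ : ∑ ω, p₂ ω = 1)
    {α : Type} [Fintype α] (A : Ω → α)
    (hdisj : ∀ ω₁ ω₂, A (e₁ ω₁) ≠ A (e₂ ω₂)) :
    Hent p A = l * Hent p₁ (fun ω => A (e₁ ω)) + m * Hent p₂ (fun ω => A (e₂ ω))
      + nml l + nml m := by
  unfold Hent
  have hd : distOf p A = fun a =>
      l * distOf p₁ (fun ω => A (e₁ ω)) a + m * distOf p₂ (fun ω => A (e₂ ω)) a :=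
    funext (distOf_mix_eq hp A)
  rw [hd, entFun_mix]
  · rw [sum_distOf]; exact hs₁
  · rw [sum_distOf]; exact hs₂
  · intro a
    by_cases h : ∃ ω₁, A (e₁ ω₁) = a
    · right
      apply distOf_eq_zero
      intro ω₂ hA
      obtain ⟨ω₁, h₁⟩ := h
      exact hdisj ω₁ ω₂ (h₁.trans hA.symm)
    · left
      apply distOf_eq_zero
      intro ω₁ hA
      exact h ⟨ω₁, hA⟩

lemma Hent_mix_ge (hp : ∀ ω, p ω = l * distOf p₁ e₁ ω + m * distOf p₂ e₂ ω)
    (hn₁ : ∀ ω, 0 ≤ p₁ ω) (hn₂ : ∀ ω, 0 ≤ p₂ ω)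
    (hl : 0 ≤ l) (hm : 0 ≤ m) (hlm : l + m = 1)
    {α : Type} [Fintype α] (A : Ω → α) :
    l * Hent p₁ (fun ω => A (e₁ ω)) + m * Hent p₂ (fun ω => A (e₂ ω)) ≤ Hent p A := by
  unfold Hent
  have hd : distOf p A = fun a =>
      l * distOf p₁ (fun ω => A (e₁ ω)) a + m * distOf p₂ (fun ω => A (e₂ ω)) a :=
    funext (distOf_mix_eq hp A)
  rw [hd]
  exact entFun_mix_ge _ _ (fun a => distOf_nonneg hn₁ _ a) (fun a => distOf_nonneg hn₂ _ a)
    hl hm hlm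

lemma Hent_congr_inj {α α' : Type} [Fintype α] [Fintype α'] (q : Ω₁ → ℝ)
    (A : Ω₁ → α) (A' : Ω₁ → α') {ι : α' → α} (hι : Function.Injective ι)
    (hA : ∀ ω, A ω = ι (A' ω)) : Hent q A = Hent q A' := by
  have : A = fun ω => ι (A' ω) := funext hA
  rw [this, Hent_comp_inj _ _ hι]

lemma CMI_mix_eq (hp : ∀ ω, p ω = l * distOf p₁ e₁ ω + m * distOf p₂ e₂ ω)
    (hs₁ : ∑ ω, p₁ ω = 1) (hs₂ : ∑ ω, p₂ ω = 1)
    {α β γ α₁ β₁ γ₁ α₂ β₂ γ₂ : Type} [Fintype α] [Fintype β] [Fintype γ]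
    [Fintype α₁] [Fintype β₁] [Fintype γ₁] [Fintype α₂] [Fintype β₂] [Fintype γ₂]
    (A : Ω → α) (B : Ω → β) (C : Ω → γ)
    (A₁ : Ω₁ → α₁) (B₁ : Ω₁ → β₁) (C₁ : Ω₁ → γ₁)
    (A₂ : Ω₂ → α₂) (B₂ : Ω₂ → β₂) (C₂ : Ω₂ → γ₂)
    {ιA₁ : α₁ → α} {ιB₁ : β₁ → β} {ιC₁ : γ₁ → γ}
    {ιA₂ : α₂ → α} {ιB₂ : β₂ → β} {ιC₂ : γ₂ → γ}
    (hιA₁ : Function.Injective ιA₁) (hιB₁ : Function.Injective ιB₁)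
    (hιC₁ : Function.Injective ιC₁) (hιA₂ : Function.Injective ιA₂)
    (hιB₂ : Function.Injective ιB₂) (hιC₂ : Function.Injective ιC₂)
    (hA₁ : ∀ ω, A (e₁ ω) = ιA₁ (A₁ ω)) (hB₁ : ∀ ω, B (e₁ ω) = ιB₁ (B₁ ω))
    (hC₁ : ∀ ω, C (e₁ ω) = ιC₁ (C₁ ω)) (hA₂ : ∀ ω, A (e₂ ω) = ιA₂ (A₂ ω))
    (hB₂ : ∀ ω, B (e₂ ω) = ιB₂ (B₂ ω)) (hC₂ : ∀ ω, C (e₂ ω) = ιC₂ (C₂ ω))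
    (hdisj : ∀ ω₁ ω₂, C (e₁ ω₁) ≠ C (e₂ ω₂)) :
    CMI p A B C = l * CMI p₁ A₁ B₁ C₁ + m * CMI p₂ A₂ B₂ C₂ := by
  unfold CMI
  rw [Hent_mix_eq hp hs₁ hs₂ (fun ω => (A ω, C ω))
      (fun ω₁ ω₂ h => hdisj ω₁ ω₂ (congrArg Prod.snd h)),
    Hent_mix_eq hp hs₁ hs₂ (fun ω => (B ω, C ω))
      (fun ω₁ ω₂ h => hdisj ω₁ ω₂ (congrArg Prod.snd h)),
    Hent_mix_eq hp hs₁ hs₂ (fun ω => (A ω, B ω, C ω))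
      (fun ω₁ ω₂ h => hdisj ω₁ ω₂ (congrArg (fun t => t.2.2) h)),
    Hent_mix_eq hp hs₁ hs₂ C hdisj]
  rw [Hent_congr_inj p₁ _ (fun ω => (A₁ ω, C₁ ω))
      ((hιA₁.prodMap hιC₁)) (fun ω => by simp [hA₁ ω, hC₁ ω, Prod.map]),
    Hent_congr_inj p₁ _ (fun ω => (B₁ ω, C₁ ω))
      ((hιB₁.prodMap hιC₁)) (fun ω => by simp [hB₁ ω, hC₁ ω, Prod.map]),
    Hent_congr_inj p₁ _ (fun ω => (A₁ ω, B₁ ω, C₁ ω))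
      ((hιA₁.prodMap (hιB₁.prodMap hιC₁))) (fun ω => by simp [hA₁ ω, hB₁ ω, hC₁ ω, Prod.map]),
    Hent_congr_inj p₁ _ C₁ hιC₁ hC₁,
    Hent_congr_inj p₂ _ (fun ω => (A₂ ω, C₂ ω))
      ((hιA₂.prodMap hιC₂)) (fun ω => by simp [hA₂ ω, hC₂ ω, Prod.map]),
    Hent_congr_inj p₂ _ (fun ω => (B₂ ω, C₂ ω))
      ((hιB₂.prodMap hιC₂)) (fun ω => by simp [hB₂ ω, hC₂ ω, Prod.map]),
    Hent_congr_inj p₂ _ (fun ω => (A₂ ω, B₂ ω, C₂ ω))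
      ((hιA₂.prodMap (hιB₂.prodMap hιC₂))) (fun ω => by simp [hA₂ ω, hB₂ ω, hC₂ ω, Prod.map]),
    Hent_congr_inj p₂ _ C₂ hιC₂ hC₂]
  ring

lemma MI_mix_ge (hp : ∀ ω, p ω = l * distOf p₁ e₁ ω + m * distOf p₂ e₂ ω)
    (hs₁ : ∑ ω, p₁ ω = 1) (hs₂ : ∑ ω, p₂ ω = 1)
    (hn₁ : ∀ ω, 0 ≤ p₁ ω) (hn₂ : ∀ ω, 0 ≤ p₂ ω)
    (hl : 0 ≤ l) (hm : 0 ≤ m) (hlm : l + m = 1)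
    {α β α₁ α₂ : Type} [Fintype α] [Fintype β] [Fintype α₁] [Fintype α₂]
    (A : Ω → α) (B : Ω → β)
    (A₁ : Ω₁ → α₁) (B₁ : Ω₁ → β) (A₂ : Ω₂ → α₂) (B₂ : Ω₂ → β)
    {ιA₁ : α₁ → α} {ιA₂ : α₂ → α}
    (hιA₁ : Function.Injective ιA₁) (hιA₂ : Function.Injective ιA₂)
    (hA₁ : ∀ ω, A (e₁ ω) = ιA₁ (A₁ ω)) (hB₁ : ∀ ω, B (e₁ ω) = B₁ ω)
    (hA₂ : ∀ ω, A (e₂ ω) = ιA₂ (A₂ ω)) (hB₂ : ∀ ω, B (e₂ ω) = B₂ ω)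
    (hdisj : ∀ ω₁ ω₂, A (e₁ ω₁) ≠ A (e₂ ω₂)) :
    l * MI p₁ A₁ B₁ + m * MI p₂ A₂ B₂ ≤ MI p A B := by
  unfold MI
  have h1 := Hent_mix_ge hp hn₁ hn₂ hl hm hlm B
  rw [Hent_congr_inj p₁ (fun ω => B (e₁ ω)) B₁ Function.injective_id
      (fun ω => hB₁ ω),
    Hent_congr_inj p₂ (fun ω => B (e₂ ω)) B₂ Function.injective_id
      (fun ω => hB₂ ω)] at h1
  rw [Hent_mix_eq hp hs₁ hs₂ A hdisj,
    Hent_mix_eq hp hs₁ hs₂ (fun ω => (A ω, B ω))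
      (fun ω₁ ω₂ h => hdisj ω₁ ω₂ (congrArg Prod.fst h)),
    Hent_congr_inj p₁ _ A₁ hιA₁ hA₁,
    Hent_congr_inj p₂ _ A₂ hιA₂ hA₂,
    Hent_congr_inj p₁ _ (fun ω => (A₁ ω, B₁ ω))
      (hιA₁.prodMap Function.injective_id) (fun ω => by simp [hA₁ ω, hB₁ ω, Prod.map]),
    Hent_congr_inj p₂ _ (fun ω => (A₂ ω, B₂ ω))
      (hιA₂.prodMap Function.injective_id) (fun ω => by simp [hA₂ ω, hB₂ ω, Prod.map])]
  nlinarith [h1]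

end MixLemmas


lemma CondIndep_mix {Ω₁ Ω₂ Ω : Type} [Fintype Ω₁] [Fintype Ω₂] [Fintype Ω]
    {p : Ω → ℝ} {p₁ : Ω₁ → ℝ} {p₂ : Ω₂ → ℝ} {e₁ : Ω₁ → Ω} {e₂ : Ω₂ → Ω} {l m : ℝ}
    (hp : ∀ ω, p ω = l * distOf p₁ e₁ ω + m * distOf p₂ e₂ ω)
    {α β γ α₁ β₁ γ₁ α₂ β₂ γ₂ : Type} [Fintype α] [Fintype β] [Fintype γ]
    [Fintype α₁] [Fintype β₁] [Fintype γ₁] [Fintype α₂] [Fintype β₂] [Fintype γ₂]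
    (A : Ω → α) (B : Ω → β) (C : Ω → γ)
    (A₁ : Ω₁ → α₁) (B₁ : Ω₁ → β₁) (C₁ : Ω₁ → γ₁)
    (A₂ : Ω₂ → α₂) (B₂ : Ω₂ → β₂) (C₂ : Ω₂ → γ₂)
    (ιA₁ : α₁ → α) (ιB₁ : β₁ → β) (ιC₁ : γ₁ → γ)
    (ιA₂ : α₂ → α) (ιB₂ : β₂ → β) (ιC₂ : γ₂ → γ)
    (hiA₁ : Function.Injective ιA₁) (hiB₁ : Function.Injective ιB₁)
    (hiC₁ : Function.Injective ιC₁) (hiA₂ : Function.Injective ιA₂)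
    (hiB₂ : Function.Injective ιB₂) (hiC₂ : Function.Injective ιC₂)
    (hA₁ : ∀ ω, A (e₁ ω) = ιA₁ (A₁ ω)) (hB₁ : ∀ ω, B (e₁ ω) = ιB₁ (B₁ ω))
    (hC₁ : ∀ ω, C (e₁ ω) = ιC₁ (C₁ ω)) (hA₂ : ∀ ω, A (e₂ ω) = ιA₂ (A₂ ω))
    (hB₂ : ∀ ω, B (e₂ ω) = ιB₂ (B₂ ω)) (hC₂ : ∀ ω, C (e₂ ω) = ιC₂ (C₂ ω))
    (hν : ∀ c₁ c₂, ιC₁ c₁ ≠ ιC₂ c₂)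
    (h1 : CondIndep p₁ A₁ B₁ C₁) (h2 : CondIndep p₂ A₂ B₂ C₂) :
    CondIndep p A B C := by
  intro a b c
  simp only [distOf_mix_eq hp]
  by_cases hc1 : ∃ c₁, c = ιC₁ c₁
  · obtain ⟨c₁, rfl⟩ := hc1
    have zC : distOf p₂ (fun ω => C (e₂ ω)) (ιC₁ c₁) = 0 :=
      distOf_eq_zero _ _ _ fun ω h => hν c₁ (C₂ ω) (((hC₂ ω).symm.trans h).symm)
    have zABC : distOf p₂ (fun ω => (A (e₂ ω), B (e₂ ω), C (e₂ ω))) (a, b, ιC₁ c₁) = 0 :=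
      distOf_eq_zero _ _ _ fun ω h =>
        hν c₁ (C₂ ω) (((hC₂ ω).symm.trans (congrArg (fun t => t.2.2) h)).symm)
    have zAC : distOf p₂ (fun ω => (A (e₂ ω), C (e₂ ω))) (a, ιC₁ c₁) = 0 :=
      distOf_eq_zero _ _ _ fun ω h =>
        hν c₁ (C₂ ω) (((hC₂ ω).symm.trans (congrArg (fun t => t.2) h)).symm)
    have zBC : distOf p₂ (fun ω => (B (e₂ ω), C (e₂ ω))) (b, ιC₁ c₁) = 0 :=
      distOf_eq_zero _ _ _ fun ω h =>
        hν c₁ (C₂ ω) (((hC₂ ω).symm.trans (congrArg (fun t => t.2) h)).symm)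
    rw [zC, zABC, zAC, zBC]
    have oC : distOf p₁ (fun ω => C (e₁ ω)) (ιC₁ c₁) = distOf p₁ C₁ c₁ := by
      rw [show (fun ω => C (e₁ ω)) = fun ω => ιC₁ (C₁ ω) from funext hC₁]
      exact distOf_comp_inj p₁ C₁ hiC₁ c₁
    rw [oC]
    by_cases ha1 : ∃ a₁, a = ιA₁ a₁
    · by_cases hb1 : ∃ b₁, b = ιB₁ b₁
      · obtain ⟨a₁, rfl⟩ := ha1
        obtain ⟨b₁, rfl⟩ := hb1
        have oABC : distOf p₁ (fun ω => (A (e₁ ω), B (e₁ ω), C (e₁ ω)))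
            (ιA₁ a₁, ιB₁ b₁, ιC₁ c₁)
            = distOf p₁ (fun ω => (A₁ ω, B₁ ω, C₁ ω)) (a₁, b₁, c₁) := by
          rw [show (fun ω => (A (e₁ ω), B (e₁ ω), C (e₁ ω)))
              = fun ω => (Prod.map ιA₁ (Prod.map ιB₁ ιC₁)) (A₁ ω, B₁ ω, C₁ ω) from
            funext fun ω => by simp [hA₁ ω, hB₁ ω, hC₁ ω]]
          exact distOf_comp_inj p₁ _ (hiA₁.prodMap (hiB₁.prodMap hiC₁)) (a₁, b₁, c₁)
        have oAC : distOf p₁ (fun ω => (A (e₁ ω), C (e₁ ω))) (ιA₁ a₁, ιC₁ c₁)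
            = distOf p₁ (fun ω => (A₁ ω, C₁ ω)) (a₁, c₁) := by
          rw [show (fun ω => (A (e₁ ω), C (e₁ ω)))
              = fun ω => (Prod.map ιA₁ ιC₁) (A₁ ω, C₁ ω) from
            funext fun ω => by simp [hA₁ ω, hC₁ ω]]
          exact distOf_comp_inj p₁ _ (hiA₁.prodMap hiC₁) (a₁, c₁)
        have oBC : distOf p₁ (fun ω => (B (e₁ ω), C (e₁ ω))) (ιB₁ b₁, ιC₁ c₁)
            = distOf p₁ (fun ω => (B₁ ω, C₁ ω)) (b₁, c₁) := by
          rw [show (fun ω => (B (e₁ ω), C (e₁ ω)))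
              = fun ω => (Prod.map ιB₁ ιC₁) (B₁ ω, C₁ ω) from
            funext fun ω => by simp [hB₁ ω, hC₁ ω]]
          exact distOf_comp_inj p₁ _ (hiB₁.prodMap hiC₁) (b₁, c₁)
        rw [oABC, oAC, oBC]
        linear_combination (l * l) * h1 a₁ b₁ c₁
      · have oABC : distOf p₁ (fun ω => (A (e₁ ω), B (e₁ ω), C (e₁ ω))) (a, b, ιC₁ c₁) = 0 :=
          distOf_eq_zero _ _ _ fun ω h =>
            hb1 ⟨B₁ ω, ((congrArg (fun t => t.2.1) h).symm.trans (hB₁ ω) : b = ιB₁ (B₁ ω))⟩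
        have oBC : distOf p₁ (fun ω => (B (e₁ ω), C (e₁ ω))) (b, ιC₁ c₁) = 0 :=
          distOf_eq_zero _ _ _ fun ω h =>
            hb1 ⟨B₁ ω, ((congrArg (fun t => t.1) h).symm.trans (hB₁ ω) : b = ιB₁ (B₁ ω))⟩
        rw [oABC, oBC]
        ring
    · have oABC : distOf p₁ (fun ω => (A (e₁ ω), B (e₁ ω), C (e₁ ω))) (a, b, ιC₁ c₁) = 0 :=
        distOf_eq_zero _ _ _ fun ω h =>
          ha1 ⟨A₁ ω, ((congrArg (fun t => t.1) h).symm.trans (hA₁ ω) : a = ιA₁ (A₁ ω))⟩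
      have oAC : distOf p₁ (fun ω => (A (e₁ ω), C (e₁ ω))) (a, ιC₁ c₁) = 0 :=
        distOf_eq_zero _ _ _ fun ω h =>
          ha1 ⟨A₁ ω, ((congrArg (fun t => t.1) h).symm.trans (hA₁ ω) : a = ιA₁ (A₁ ω))⟩
      rw [oABC, oAC]
      ring
  · have zC1 : distOf p₁ (fun ω => C (e₁ ω)) c = 0 :=
      distOf_eq_zero _ _ _ fun ω h => hc1 ⟨C₁ ω, (h.symm.trans (hC₁ ω))⟩
    have zABC1 : distOf p₁ (fun ω => (A (e₁ ω), B (e₁ ω), C (e₁ ω))) (a, b, c) = 0 :=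
      distOf_eq_zero _ _ _ fun ω h =>
        hc1 ⟨C₁ ω, ((congrArg (fun t => t.2.2) h).symm.trans (hC₁ ω))⟩
    have zAC1 : distOf p₁ (fun ω => (A (e₁ ω), C (e₁ ω))) (a, c) = 0 :=
      distOf_eq_zero _ _ _ fun ω h =>
        hc1 ⟨C₁ ω, ((congrArg (fun t => t.2) h).symm.trans (hC₁ ω))⟩
    have zBC1 : distOf p₁ (fun ω => (B (e₁ ω), C (e₁ ω))) (b, c) = 0 :=
      distOf_eq_zero _ _ _ fun ω h =>
        hc1 ⟨C₁ ω, ((congrArg (fun t => t.2) h).symm.trans (hC₁ ω))⟩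
    rw [zC1, zABC1, zAC1, zBC1]
    by_cases hc2 : ∃ c₂, c = ιC₂ c₂
    · obtain ⟨c₂, rfl⟩ := hc2
      have oC : distOf p₂ (fun ω => C (e₂ ω)) (ιC₂ c₂) = distOf p₂ C₂ c₂ := by
        rw [show (fun ω => C (e₂ ω)) = fun ω => ιC₂ (C₂ ω) from funext hC₂]
        exact distOf_comp_inj p₂ C₂ hiC₂ c₂
      rw [oC]
      by_cases ha2 : ∃ a₂, a = ιA₂ a₂
      · by_cases hb2 : ∃ b₂, b = ιB₂ b₂
        · obtain ⟨a₂, rfl⟩ := ha2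
          obtain ⟨b₂, rfl⟩ := hb2
          have oABC : distOf p₂ (fun ω => (A (e₂ ω), B (e₂ ω), C (e₂ ω)))
              (ιA₂ a₂, ιB₂ b₂, ιC₂ c₂)
              = distOf p₂ (fun ω => (A₂ ω, B₂ ω, C₂ ω)) (a₂, b₂, c₂) := by
            rw [show (fun ω => (A (e₂ ω), B (e₂ ω), C (e₂ ω)))
                = fun ω => (Prod.map ιA₂ (Prod.map ιB₂ ιC₂)) (A₂ ω, B₂ ω, C₂ ω) from
              funext fun ω => by simp [hA₂ ω, hB₂ ω, hC₂ ω]]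
            exact distOf_comp_inj p₂ _ (hiA₂.prodMap (hiB₂.prodMap hiC₂)) (a₂, b₂, c₂)
          have oAC : distOf p₂ (fun ω => (A (e₂ ω), C (e₂ ω))) (ιA₂ a₂, ιC₂ c₂)
              = distOf p₂ (fun ω => (A₂ ω, C₂ ω)) (a₂, c₂) := by
            rw [show (fun ω => (A (e₂ ω), C (e₂ ω)))
                = fun ω => (Prod.map ιA₂ ιC₂) (A₂ ω, C₂ ω) from
              funext fun ω => by simp [hA₂ ω, hC₂ ω]]
            exact distOf_comp_inj p₂ _ (hiA₂.prodMap hiC₂) (a₂, c₂)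
          have oBC : distOf p₂ (fun ω => (B (e₂ ω), C (e₂ ω))) (ιB₂ b₂, ιC₂ c₂)
              = distOf p₂ (fun ω => (B₂ ω, C₂ ω)) (b₂, c₂) := by
            rw [show (fun ω => (B (e₂ ω), C (e₂ ω)))
                = fun ω => (Prod.map ιB₂ ιC₂) (B₂ ω, C₂ ω) from
              funext fun ω => by simp [hB₂ ω, hC₂ ω]]
            exact distOf_comp_inj p₂ _ (hiB₂.prodMap hiC₂) (b₂, c₂)
          rw [oABC, oAC, oBC]
          linear_combination (m * m) * h2 a₂ b₂ c₂
        · have oABC : distOf p₂ (fun ω => (A (e₂ ω), B (e₂ ω), C (e₂ ω))) (a, b, ιC₂ c₂) = 0 :=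
            distOf_eq_zero _ _ _ fun ω h =>
              hb2 ⟨B₂ ω, ((congrArg (fun t => t.2.1) h).symm.trans (hB₂ ω) : b = ιB₂ (B₂ ω))⟩
          have oBC : distOf p₂ (fun ω => (B (e₂ ω), C (e₂ ω))) (b, ιC₂ c₂) = 0 :=
            distOf_eq_zero _ _ _ fun ω h =>
              hb2 ⟨B₂ ω, ((congrArg (fun t => t.1) h).symm.trans (hB₂ ω) : b = ιB₂ (B₂ ω))⟩
          rw [oABC, oBC]
          ring
      · have oABC : distOf p₂ (fun ω => (A (e₂ ω), B (e₂ ω), C (e₂ ω))) (a, b, ιC₂ c₂) = 0 :=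
          distOf_eq_zero _ _ _ fun ω h =>
            ha2 ⟨A₂ ω, ((congrArg (fun t => t.1) h).symm.trans (hA₂ ω) : a = ιA₂ (A₂ ω))⟩
        have oAC : distOf p₂ (fun ω => (A (e₂ ω), C (e₂ ω))) (a, ιC₂ c₂) = 0 :=
          distOf_eq_zero _ _ _ fun ω h =>
            ha2 ⟨A₂ ω, ((congrArg (fun t => t.1) h).symm.trans (hA₂ ω) : a = ιA₂ (A₂ ω))⟩
        rw [oABC, oAC]
        ring
    · have zC2 : distOf p₂ (fun ω => C (e₂ ω)) c = 0 :=
        distOf_eq_zero _ _ _ fun ω h => hc2 ⟨C₂ ω, (h.symm.trans (hC₂ ω))⟩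
      have zABC2 : distOf p₂ (fun ω => (A (e₂ ω), B (e₂ ω), C (e₂ ω))) (a, b, c) = 0 :=
        distOf_eq_zero _ _ _ fun ω h =>
          hc2 ⟨C₂ ω, ((congrArg (fun t => t.2.2) h).symm.trans (hC₂ ω))⟩
      have zAC2 : distOf p₂ (fun ω => (A (e₂ ω), C (e₂ ω))) (a, c) = 0 :=
        distOf_eq_zero _ _ _ fun ω h =>
          hc2 ⟨C₂ ω, ((congrArg (fun t => t.2) h).symm.trans (hC₂ ω))⟩
      have zBC2 : distOf p₂ (fun ω => (B (e₂ ω), C (e₂ ω))) (b, c) = 0 :=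
        distOf_eq_zero _ _ _ fun ω h =>
          hc2 ⟨C₂ ω, ((congrArg (fun t => t.2) h).symm.trans (hC₂ ω))⟩
      rw [zC2, zABC2, zAC2, zBC2]

/-- A discrete memoryless broadcast channel with input alphabet `X` and
output alphabets `Y1`, `Y2`. -/
structure BCChannel (X Y1 Y2 : Type) [Fintype X] [Fintype Y1] [Fintype Y2] where
  Q : X → Y1 → Y2 → ℝ
  nonneg : ∀ x y1 y2, 0 ≤ Q x y1 y2
  sum_one : ∀ x, ∑ y1, ∑ y2, Q x y1 y2 = 1

/-- The message-set size `⌈2^{nR}⌉`. -/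
def msgSize (n : ℕ) (R : ℝ) : ℕ := ⌈(2 : ℝ) ^ ((n : ℝ) * R)⌉₊

/-- The rate inequalities of the outer bound (Theorem 2), computed with respect to
the joint pmf `p` of `(W,U,V,X,Y1,Y2)`. -/
def outerConstraints {X Y1 Y2 : Type} [Fintype X] [Fintype Y1] [Fintype Y2]
    {kW kU kV : ℕ}
    (p : Fin kW × Fin kU × Fin kV × X × Y1 × Y2 → ℝ) (L1 L2 R0 R1 R2 : ℝ) : Prop :=
  let W : Fin kW × Fin kU × Fin kV × X × Y1 × Y2 → Fin kW := fun ω => ω.1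
  let U : Fin kW × Fin kU × Fin kV × X × Y1 × Y2 → Fin kU := fun ω => ω.2.1
  let V : Fin kW × Fin kU × Fin kV × X × Y1 × Y2 → Fin kV := fun ω => ω.2.2.1
  let Z1 : Fin kW × Fin kU × Fin kV × X × Y1 × Y2 → Y1 := fun ω => ω.2.2.2.2.1
  let Z2 : Fin kW × Fin kU × Fin kV × X × Y1 × Y2 → Y2 := fun ω => ω.2.2.2.2.2
  R0 ≤ min (MI p W Z1) (MI p W Z2) ∧
  R1 ≤ CMI p U Z1 (fun ω => (W ω, V ω)) - CMI p U Z2 (fun ω => (W ω, V ω)) + L1 ∧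
  R1 ≤ CMI p U Z1 W - CMI p U Z2 W + L1 ∧
  R0 + R1 ≤ CMI p U Z1 W + min (MI p W Z1) (MI p W Z2) ∧
  R2 ≤ CMI p V Z2 (fun ω => (W ω, U ω)) - CMI p V Z1 (fun ω => (W ω, U ω)) + L2 ∧
  R2 ≤ CMI p V Z2 W - CMI p V Z1 W + L2 ∧
  R0 + R2 ≤ CMI p V Z2 W + min (MI p W Z1) (MI p W Z2) ∧
  R0 + R1 + R2 ≤ CMI p U Z1 (fun ω => (W ω, V ω)) + CMI p V Z2 W
      + min (MI p W Z1) (MI p W Z2) ∧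
  R0 + R1 + R2 ≤ CMI p U Z1 W + CMI p V Z2 (fun ω => (W ω, U ω))
      + min (MI p W Z1) (MI p W Z2)

/-- The outer-bound region `R_O(L1,L2)`: the closure of the union, over all finite
auxiliary alphabets and all joint pmfs of the form `P_{W,U,V} P_{X|U,V} Q`
(i.e. `W ⊥ X` given `(U,V)`), of the triples satisfying the outer constraints. -/
def outerRegion {X Y1 Y2 : Type} [Fintype X] [Fintype Y1] [Fintype Y2]
    (ch : BCChannel X Y1 Y2) (L1 L2 : ℝ) : Set (ℝ × ℝ × ℝ) :=
  closure {r : ℝ × ℝ × ℝ | 0 ≤ r.1 ∧ 0 ≤ r.2.1 ∧ 0 ≤ r.2.2 ∧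
    ∃ (kW kU kV : ℕ) (P : Fin kW × Fin kU × Fin kV × X → ℝ), IsPMF P ∧
      CondIndep P (fun a => a.1) (fun a => a.2.2.2) (fun a => (a.2.1, a.2.2.1)) ∧
      ∃ p : Fin kW × Fin kU × Fin kV × X × Y1 × Y2 → ℝ,
        (∀ w u v x y1 y2,
            p (w, u, v, x, y1, y2) = P (w, u, v, x) * ch.Q x y1 y2) ∧
        outerConstraints p L1 L2 r.1 r.2.1 r.2.2}

/-- **Theorem 2 (convexity).** The outer-bound region `R_O(L1,L2)` is convex. -/
theorem outerRegion_convex {X Y1 Y2 : Type} [Fintype X] [Fintype Y1] [Fintype Y2]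
    (ch : BCChannel X Y1 Y2) (L1 L2 : ℝ) (hL1 : 0 ≤ L1) (hL2 : 0 ≤ L2) :
    Convex ℝ (outerRegion ch L1 L2) := by
  have hconv : Convex ℝ {r : ℝ × ℝ × ℝ | 0 ≤ r.1 ∧ 0 ≤ r.2.1 ∧ 0 ≤ r.2.2 ∧
      ∃ (kW kU kV : ℕ) (P : Fin kW × Fin kU × Fin kV × X → ℝ), IsPMF P ∧
        CondIndep P (fun a => a.1) (fun a => a.2.2.2) (fun a => (a.2.1, a.2.2.1)) ∧
        ∃ p : Fin kW × Fin kU × Fin kV × X × Y1 × Y2 → ℝ,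
          (∀ w u v x y1 y2,
              p (w, u, v, x, y1, y2) = P (w, u, v, x) * ch.Q x y1 y2) ∧
          outerConstraints p L1 L2 r.1 r.2.1 r.2.2} := by
    rintro ⟨a0, a1, a2⟩ ⟨ha0, ha1, ha2, kW₁, kU₁, kV₁, P₁, hP₁, hCI₁, p₁, hp₁, hoc₁⟩
      ⟨b0, b1, b2⟩ ⟨hb0, hb1, hb2, kW₂, kU₂, kV₂, P₂, hP₂, hCI₂, p₂, hp₂, hoc₂⟩
      l m hl hm hlm
    simp only [Set.mem_setOf_eq, Prod.smul_mk, Prod.mk_add_mk, smul_eq_mul]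
    have hp₁f : p₁ = fun ω => P₁ (ω.1, ω.2.1, ω.2.2.1, ω.2.2.2.1)
        * ch.Q ω.2.2.2.1 ω.2.2.2.2.1 ω.2.2.2.2.2 := by
      funext ω
      obtain ⟨w, u, v, x, y1, y2⟩ := ω
      exact hp₁ w u v x y1 y2
    have hp₂f : p₂ = fun ω => P₂ (ω.1, ω.2.1, ω.2.2.1, ω.2.2.2.1)
        * ch.Q ω.2.2.2.1 ω.2.2.2.2.1 ω.2.2.2.2.2 := by
      funext ω
      obtain ⟨w, u, v, x, y1, y2⟩ := ω
      exact hp₂ w u v x y1 y2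
    have hp₁n : ∀ ω, 0 ≤ p₁ ω := by
      intro ω; rw [hp₁f]; exact mul_nonneg (hP₁.1 _) (ch.nonneg _ _ _)
    have hp₂n : ∀ ω, 0 ≤ p₂ ω := by
      intro ω; rw [hp₂f]; exact mul_nonneg (hP₂.1 _) (ch.nonneg _ _ _)
    have hp₁s : ∑ ω, p₁ ω = 1 := by
      rw [hp₁f]; exact sum_prod_channel ch.Q ch.sum_one P₁ hP₁.2
    have hp₂s : ∑ ω, p₂ ω = 1 := by
      rw [hp₂f]; exact sum_prod_channel ch.Q ch.sum_one P₂ hP₂.2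
    let e₁ : Fin kW₁ × Fin kU₁ × Fin kV₁ × X →
        Fin (kW₁ + kW₂) × Fin (kU₁ + kU₂) × Fin (kV₁ + kV₂) × X :=
      fun z => (Fin.castAdd kW₂ z.1, Fin.castAdd kU₂ z.2.1, Fin.castAdd kV₂ z.2.2.1, z.2.2.2)
    let e₂ : Fin kW₂ × Fin kU₂ × Fin kV₂ × X →
        Fin (kW₁ + kW₂) × Fin (kU₁ + kU₂) × Fin (kV₁ + kV₂) × X :=
      fun z => (Fin.natAdd kW₁ z.1, Fin.natAdd kU₁ z.2.1, Fin.natAdd kV₁ z.2.2.1, z.2.2.2)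
    let P : Fin (kW₁ + kW₂) × Fin (kU₁ + kU₂) × Fin (kV₁ + kV₂) × X → ℝ :=
      fun z => l * distOf P₁ e₁ z + m * distOf P₂ e₂ z
    let f₁ : Fin kW₁ × Fin kU₁ × Fin kV₁ × X × Y1 × Y2 →
        Fin (kW₁ + kW₂) × Fin (kU₁ + kU₂) × Fin (kV₁ + kV₂) × X × Y1 × Y2 :=
      fun ω => (Fin.castAdd kW₂ ω.1, Fin.castAdd kU₂ ω.2.1, Fin.castAdd kV₂ ω.2.2.1,
        ω.2.2.2.1, ω.2.2.2.2.1, ω.2.2.2.2.2)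
    let f₂ : Fin kW₂ × Fin kU₂ × Fin kV₂ × X × Y1 × Y2 →
        Fin (kW₁ + kW₂) × Fin (kU₁ + kU₂) × Fin (kV₁ + kV₂) × X × Y1 × Y2 :=
      fun ω => (Fin.natAdd kW₁ ω.1, Fin.natAdd kU₁ ω.2.1, Fin.natAdd kV₁ ω.2.2.1,
        ω.2.2.2.1, ω.2.2.2.2.1, ω.2.2.2.2.2)
    let p : Fin (kW₁ + kW₂) × Fin (kU₁ + kU₂) × Fin (kV₁ + kV₂) × X × Y1 × Y2 → ℝ :=
      fun ω => P (ω.1, ω.2.1, ω.2.2.1, ω.2.2.2.1) * ch.Q ω.2.2.2.1 ω.2.2.2.2.1 ω.2.2.2.2.2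
    have hpmix : ∀ ω, p ω = l * distOf p₁ f₁ ω + m * distOf p₂ f₂ ω := by
      intro ω
      obtain ⟨w, u, v, x, y1, y2⟩ := ω
      have d1 : distOf p₁ f₁ (w, u, v, x, y1, y2)
          = distOf P₁ e₁ (w, u, v, x) * ch.Q x y1 y2 := by
        rw [hp₁f]
        exact distOf_prod_channel ch.Q P₁ _ _ _ w u v x y1 y2
      have d2 : distOf p₂ f₂ (w, u, v, x, y1, y2)
          = distOf P₂ e₂ (w, u, v, x) * ch.Q x y1 y2 := by
        rw [hp₂f]
        exact distOf_prod_channel ch.Q P₂ _ _ _ w u v x y1 y2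
      rw [d1, d2]
      show (l * distOf P₁ e₁ (w, u, v, x) + m * distOf P₂ e₂ (w, u, v, x)) * ch.Q x y1 y2 = _
      ring
    have hPn : ∀ z, 0 ≤ P z := fun z =>
      add_nonneg (mul_nonneg hl (distOf_nonneg hP₁.1 _ _))
        (mul_nonneg hm (distOf_nonneg hP₂.1 _ _))
    have hPs : ∑ z, P z = 1 := by
      show ∑ z, (l * distOf P₁ e₁ z + m * distOf P₂ e₂ z) = 1
      rw [Finset.sum_add_distrib, ← Finset.mul_sum, ← Finset.mul_sum,
        sum_distOf, sum_distOf, hP₁.2, hP₂.2, mul_one, mul_one, hlm]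
    refine ⟨add_nonneg (mul_nonneg hl ha0) (mul_nonneg hm hb0),
      add_nonneg (mul_nonneg hl ha1) (mul_nonneg hm hb1),
      add_nonneg (mul_nonneg hl ha2) (mul_nonneg hm hb2),
      kW₁ + kW₂, kU₁ + kU₂, kV₁ + kV₂, P, ⟨hPn, hPs⟩, ?_, p,
      fun _ _ _ _ _ _ => rfl, ?_⟩
    · exact CondIndep_mix (e₁ := e₁) (e₂ := e₂) (fun z => rfl)
        (fun a => a.1) (fun a => a.2.2.2) (fun a => (a.2.1, a.2.2.1))
        (fun a => a.1) (fun a => a.2.2.2) (fun a => (a.2.1, a.2.2.1))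
        (fun a => a.1) (fun a => a.2.2.2) (fun a => (a.2.1, a.2.2.1))
        (Fin.castAdd kW₂) id (Prod.map (Fin.castAdd kU₂) (Fin.castAdd kV₂))
        (Fin.natAdd kW₁) id (Prod.map (Fin.natAdd kU₁) (Fin.natAdd kV₁))
        (Fin.castAdd_injective kW₁ kW₂) Function.injective_id
        ((Fin.castAdd_injective kU₁ kU₂).prodMap (Fin.castAdd_injective kV₁ kV₂))
        (natAdd_injective kW₁ kW₂) Function.injective_id
        ((natAdd_injective kU₁ kU₂).prodMap (natAdd_injective kV₁ kV₂))
        (fun ω => rfl) (fun ω => rfl) (fun ω => rfl)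
        (fun ω => rfl) (fun ω => rfl) (fun ω => rfl)
        (fun c₁ c₂ h => castAdd_ne_natAdd _ _ (congrArg Prod.fst h))
        hCI₁ hCI₂
    have hoc₁' : (a0 ≤ min (MI p₁ (fun ω => ω.1) (fun ω => ω.2.2.2.2.1)) (MI p₁ (fun ω => ω.1) (fun ω => ω.2.2.2.2.2))) ∧
      (a1 ≤ CMI p₁ (fun ω => ω.2.1) (fun ω => ω.2.2.2.2.1) (fun ω => (ω.1, ω.2.2.1)) - CMI p₁ (fun ω => ω.2.1) (fun ω => ω.2.2.2.2.2) (fun ω => (ω.1, ω.2.2.1)) + L1) ∧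
      (a1 ≤ CMI p₁ (fun ω => ω.2.1) (fun ω => ω.2.2.2.2.1) (fun ω => ω.1) - CMI p₁ (fun ω => ω.2.1) (fun ω => ω.2.2.2.2.2) (fun ω => ω.1) + L1) ∧
      (a0 + a1 ≤ CMI p₁ (fun ω => ω.2.1) (fun ω => ω.2.2.2.2.1) (fun ω => ω.1) + min (MI p₁ (fun ω => ω.1) (fun ω => ω.2.2.2.2.1)) (MI p₁ (fun ω => ω.1) (fun ω => ω.2.2.2.2.2))) ∧
      (a2 ≤ CMI p₁ (fun ω => ω.2.2.1) (fun ω => ω.2.2.2.2.2) (fun ω => (ω.1, ω.2.1)) - CMI p₁ (fun ω => ω.2.2.1) (fun ω => ω.2.2.2.2.1) (fun ω => (ω.1, ω.2.1)) + L2) ∧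
      (a2 ≤ CMI p₁ (fun ω => ω.2.2.1) (fun ω => ω.2.2.2.2.2) (fun ω => ω.1) - CMI p₁ (fun ω => ω.2.2.1) (fun ω => ω.2.2.2.2.1) (fun ω => ω.1) + L2) ∧
      (a0 + a2 ≤ CMI p₁ (fun ω => ω.2.2.1) (fun ω => ω.2.2.2.2.2) (fun ω => ω.1) + min (MI p₁ (fun ω => ω.1) (fun ω => ω.2.2.2.2.1)) (MI p₁ (fun ω => ω.1) (fun ω => ω.2.2.2.2.2))) ∧
      (a0 + a1 + a2 ≤ CMI p₁ (fun ω => ω.2.1) (fun ω => ω.2.2.2.2.1) (fun ω => (ω.1, ω.2.2.1)) + CMI p₁ (fun ω => ω.2.2.1) (fun ω => ω.2.2.2.2.2) (fun ω => ω.1) + min (MI p₁ (fun ω => ω.1) (fun ω => ω.2.2.2.2.1)) (MI p₁ (fun ω => ω.1) (fun ω => ω.2.2.2.2.2))) ∧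
      (a0 + a1 + a2 ≤ CMI p₁ (fun ω => ω.2.1) (fun ω => ω.2.2.2.2.1) (fun ω => ω.1) + CMI p₁ (fun ω => ω.2.2.1) (fun ω => ω.2.2.2.2.2) (fun ω => (ω.1, ω.2.1)) + min (MI p₁ (fun ω => ω.1) (fun ω => ω.2.2.2.2.1)) (MI p₁ (fun ω => ω.1) (fun ω => ω.2.2.2.2.2))) := hoc₁
    have hoc₂' : (b0 ≤ min (MI p₂ (fun ω => ω.1) (fun ω => ω.2.2.2.2.1)) (MI p₂ (fun ω => ω.1) (fun ω => ω.2.2.2.2.2))) ∧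
      (b1 ≤ CMI p₂ (fun ω => ω.2.1) (fun ω => ω.2.2.2.2.1) (fun ω => (ω.1, ω.2.2.1)) - CMI p₂ (fun ω => ω.2.1) (fun ω => ω.2.2.2.2.2) (fun ω => (ω.1, ω.2.2.1)) + L1) ∧
      (b1 ≤ CMI p₂ (fun ω => ω.2.1) (fun ω => ω.2.2.2.2.1) (fun ω => ω.1) - CMI p₂ (fun ω => ω.2.1) (fun ω => ω.2.2.2.2.2) (fun ω => ω.1) + L1) ∧
      (b0 + b1 ≤ CMI p₂ (fun ω => ω.2.1) (fun ω => ω.2.2.2.2.1) (fun ω => ω.1) + min (MI p₂ (fun ω => ω.1) (fun ω => ω.2.2.2.2.1)) (MI p₂ (fun ω => ω.1) (fun ω => ω.2.2.2.2.2))) ∧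
      (b2 ≤ CMI p₂ (fun ω => ω.2.2.1) (fun ω => ω.2.2.2.2.2) (fun ω => (ω.1, ω.2.1)) - CMI p₂ (fun ω => ω.2.2.1) (fun ω => ω.2.2.2.2.1) (fun ω => (ω.1, ω.2.1)) + L2) ∧
      (b2 ≤ CMI p₂ (fun ω => ω.2.2.1) (fun ω => ω.2.2.2.2.2) (fun ω => ω.1) - CMI p₂ (fun ω => ω.2.2.1) (fun ω => ω.2.2.2.2.1) (fun ω => ω.1) + L2) ∧
      (b0 + b2 ≤ CMI p₂ (fun ω => ω.2.2.1) (fun ω => ω.2.2.2.2.2) (fun ω => ω.1) + min (MI p₂ (fun ω => ω.1) (fun ω => ω.2.2.2.2.1)) (MI p₂ (fun ω => ω.1) (fun ω => ω.2.2.2.2.2))) ∧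
      (b0 + b1 + b2 ≤ CMI p₂ (fun ω => ω.2.1) (fun ω => ω.2.2.2.2.1) (fun ω => (ω.1, ω.2.2.1)) + CMI p₂ (fun ω => ω.2.2.1) (fun ω => ω.2.2.2.2.2) (fun ω => ω.1) + min (MI p₂ (fun ω => ω.1) (fun ω => ω.2.2.2.2.1)) (MI p₂ (fun ω => ω.1) (fun ω => ω.2.2.2.2.2))) ∧
      (b0 + b1 + b2 ≤ CMI p₂ (fun ω => ω.2.1) (fun ω => ω.2.2.2.2.1) (fun ω => ω.1) + CMI p₂ (fun ω => ω.2.2.1) (fun ω => ω.2.2.2.2.2) (fun ω => (ω.1, ω.2.1)) + min (MI p₂ (fun ω => ω.1) (fun ω => ω.2.2.2.2.1)) (MI p₂ (fun ω => ω.1) (fun ω => ω.2.2.2.2.2))) := hoc₂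
    obtain ⟨h₁0, h₁1a, h₁1b, h₁01, h₁2a, h₁2b, h₁02, h₁s1, h₁s2⟩ := hoc₁'
    obtain ⟨h₂0, h₂1a, h₂1b, h₂01, h₂2a, h₂2b, h₂02, h₂s1, h₂s2⟩ := hoc₂'
    have hMI1 : l * MI p₁ (fun ω => ω.1) (fun ω => ω.2.2.2.2.1) + m * MI p₂ (fun ω => ω.1) (fun ω => ω.2.2.2.2.1)
        ≤ MI p (fun ω => ω.1) (fun ω => ω.2.2.2.2.1) :=
      MI_mix_ge hpmix hp₁s hp₂s hp₁n hp₂n hl hm hlm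
        (fun ω => ω.1) (fun ω => ω.2.2.2.2.1) (fun ω => ω.1) (fun ω => ω.2.2.2.2.1) (fun ω => ω.1) (fun ω => ω.2.2.2.2.1)
        (Fin.castAdd_injective kW₁ kW₂) (natAdd_injective kW₁ kW₂)
        (fun ω => rfl) (fun ω => rfl) (fun ω => rfl) (fun ω => rfl)
        (fun ω₁ ω₂ h => castAdd_ne_natAdd _ _ h)
    have hMI2 : l * MI p₁ (fun ω => ω.1) (fun ω => ω.2.2.2.2.2) + m * MI p₂ (fun ω => ω.1) (fun ω => ω.2.2.2.2.2)
        ≤ MI p (fun ω => ω.1) (fun ω => ω.2.2.2.2.2) :=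
      MI_mix_ge hpmix hp₁s hp₂s hp₁n hp₂n hl hm hlm
        (fun ω => ω.1) (fun ω => ω.2.2.2.2.2) (fun ω => ω.1) (fun ω => ω.2.2.2.2.2) (fun ω => ω.1) (fun ω => ω.2.2.2.2.2)
        (Fin.castAdd_injective kW₁ kW₂) (natAdd_injective kW₁ kW₂)
        (fun ω => rfl) (fun ω => rfl) (fun ω => rfl) (fun ω => rfl)
        (fun ω₁ ω₂ h => castAdd_ne_natAdd _ _ h)
    have hminle : l * (min (MI p₁ (fun ω => ω.1) (fun ω => ω.2.2.2.2.1)) (MI p₁ (fun ω => ω.1) (fun ω => ω.2.2.2.2.2))) + m * (min (MI p₂ (fun ω => ω.1) (fun ω => ω.2.2.2.2.1)) (MI p₂ (fun ω => ω.1) (fun ω => ω.2.2.2.2.2)))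
        ≤ min (MI p (fun ω => ω.1) (fun ω => ω.2.2.2.2.1)) (MI p (fun ω => ω.1) (fun ω => ω.2.2.2.2.2)) := by
      apply le_min
      · calc l * (min (MI p₁ (fun ω => ω.1) (fun ω => ω.2.2.2.2.1)) (MI p₁ (fun ω => ω.1) (fun ω => ω.2.2.2.2.2))) + m * (min (MI p₂ (fun ω => ω.1) (fun ω => ω.2.2.2.2.1)) (MI p₂ (fun ω => ω.1) (fun ω => ω.2.2.2.2.2)))
            ≤ l * MI p₁ (fun ω => ω.1) (fun ω => ω.2.2.2.2.1) + m * MI p₂ (fun ω => ω.1) (fun ω => ω.2.2.2.2.1) :=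
              add_le_add (mul_le_mul_of_nonneg_left (min_le_left _ _) hl)
                (mul_le_mul_of_nonneg_left (min_le_left _ _) hm)
          _ ≤ MI p (fun ω => ω.1) (fun ω => ω.2.2.2.2.1) := hMI1
      · calc l * (min (MI p₁ (fun ω => ω.1) (fun ω => ω.2.2.2.2.1)) (MI p₁ (fun ω => ω.1) (fun ω => ω.2.2.2.2.2))) + m * (min (MI p₂ (fun ω => ω.1) (fun ω => ω.2.2.2.2.1)) (MI p₂ (fun ω => ω.1) (fun ω => ω.2.2.2.2.2)))
            ≤ l * MI p₁ (fun ω => ω.1) (fun ω => ω.2.2.2.2.2) + m * MI p₂ (fun ω => ω.1) (fun ω => ω.2.2.2.2.2) :=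
              add_le_add (mul_le_mul_of_nonneg_left (min_le_right _ _) hl)
                (mul_le_mul_of_nonneg_left (min_le_right _ _) hm)
          _ ≤ MI p (fun ω => ω.1) (fun ω => ω.2.2.2.2.2) := hMI2
    have EU1WV : CMI p (fun ω => ω.2.1) (fun ω => ω.2.2.2.2.1) (fun ω => (ω.1, ω.2.2.1))
        = l * CMI p₁ (fun ω => ω.2.1) (fun ω => ω.2.2.2.2.1) (fun ω => (ω.1, ω.2.2.1)) + m * CMI p₂ (fun ω => ω.2.1) (fun ω => ω.2.2.2.2.1) (fun ω => (ω.1, ω.2.2.1)) :=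
      CMI_mix_eq hpmix hp₁s hp₂s (fun ω => ω.2.1) (fun ω => ω.2.2.2.2.1) (fun ω => (ω.1, ω.2.2.1)) (fun ω => ω.2.1) (fun ω => ω.2.2.2.2.1) (fun ω => (ω.1, ω.2.2.1)) (fun ω => ω.2.1) (fun ω => ω.2.2.2.2.1) (fun ω => (ω.1, ω.2.2.1))
        (Fin.castAdd_injective kU₁ kU₂) Function.injective_id ((Fin.castAdd_injective kW₁ kW₂).prodMap (Fin.castAdd_injective kV₁ kV₂))
        (natAdd_injective kU₁ kU₂) Function.injective_id ((natAdd_injective kW₁ kW₂).prodMap (natAdd_injective kV₁ kV₂))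
        (fun ω => rfl) (fun ω => rfl) (fun ω => rfl)
        (fun ω => rfl) (fun ω => rfl) (fun ω => rfl)
        (fun ω₁ ω₂ h => castAdd_ne_natAdd _ _ (congrArg Prod.fst h))
    have EU2WV : CMI p (fun ω => ω.2.1) (fun ω => ω.2.2.2.2.2) (fun ω => (ω.1, ω.2.2.1))
        = l * CMI p₁ (fun ω => ω.2.1) (fun ω => ω.2.2.2.2.2) (fun ω => (ω.1, ω.2.2.1)) + m * CMI p₂ (fun ω => ω.2.1) (fun ω => ω.2.2.2.2.2) (fun ω => (ω.1, ω.2.2.1)) :=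
      CMI_mix_eq hpmix hp₁s hp₂s (fun ω => ω.2.1) (fun ω => ω.2.2.2.2.2) (fun ω => (ω.1, ω.2.2.1)) (fun ω => ω.2.1) (fun ω => ω.2.2.2.2.2) (fun ω => (ω.1, ω.2.2.1)) (fun ω => ω.2.1) (fun ω => ω.2.2.2.2.2) (fun ω => (ω.1, ω.2.2.1))
        (Fin.castAdd_injective kU₁ kU₂) Function.injective_id ((Fin.castAdd_injective kW₁ kW₂).prodMap (Fin.castAdd_injective kV₁ kV₂))
        (natAdd_injective kU₁ kU₂) Function.injective_id ((natAdd_injective kW₁ kW₂).prodMap (natAdd_injective kV₁ kV₂))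
        (fun ω => rfl) (fun ω => rfl) (fun ω => rfl)
        (fun ω => rfl) (fun ω => rfl) (fun ω => rfl)
        (fun ω₁ ω₂ h => castAdd_ne_natAdd _ _ (congrArg Prod.fst h))
    have EU1W : CMI p (fun ω => ω.2.1) (fun ω => ω.2.2.2.2.1) (fun ω => ω.1)
        = l * CMI p₁ (fun ω => ω.2.1) (fun ω => ω.2.2.2.2.1) (fun ω => ω.1) + m * CMI p₂ (fun ω => ω.2.1) (fun ω => ω.2.2.2.2.1) (fun ω => ω.1) :=
      CMI_mix_eq hpmix hp₁s hp₂s (fun ω => ω.2.1) (fun ω => ω.2.2.2.2.1) (fun ω => ω.1) (fun ω => ω.2.1) (fun ω => ω.2.2.2.2.1) (fun ω => ω.1) (fun ω => ω.2.1) (fun ω => ω.2.2.2.2.1) (fun ω => ω.1)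
        (Fin.castAdd_injective kU₁ kU₂) Function.injective_id (Fin.castAdd_injective kW₁ kW₂)
        (natAdd_injective kU₁ kU₂) Function.injective_id (natAdd_injective kW₁ kW₂)
        (fun ω => rfl) (fun ω => rfl) (fun ω => rfl)
        (fun ω => rfl) (fun ω => rfl) (fun ω => rfl)
        (fun ω₁ ω₂ h => castAdd_ne_natAdd _ _ h)
    have EU2W : CMI p (fun ω => ω.2.1) (fun ω => ω.2.2.2.2.2) (fun ω => ω.1)
        = l * CMI p₁ (fun ω => ω.2.1) (fun ω => ω.2.2.2.2.2) (fun ω => ω.1) + m * CMI p₂ (fun ω => ω.2.1) (fun ω => ω.2.2.2.2.2) (fun ω => ω.1) :=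
      CMI_mix_eq hpmix hp₁s hp₂s (fun ω => ω.2.1) (fun ω => ω.2.2.2.2.2) (fun ω => ω.1) (fun ω => ω.2.1) (fun ω => ω.2.2.2.2.2) (fun ω => ω.1) (fun ω => ω.2.1) (fun ω => ω.2.2.2.2.2) (fun ω => ω.1)
        (Fin.castAdd_injective kU₁ kU₂) Function.injective_id (Fin.castAdd_injective kW₁ kW₂)
        (natAdd_injective kU₁ kU₂) Function.injective_id (natAdd_injective kW₁ kW₂)
        (fun ω => rfl) (fun ω => rfl) (fun ω => rfl)
        (fun ω => rfl) (fun ω => rfl) (fun ω => rfl)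
        (fun ω₁ ω₂ h => castAdd_ne_natAdd _ _ h)
    have EV2WU : CMI p (fun ω => ω.2.2.1) (fun ω => ω.2.2.2.2.2) (fun ω => (ω.1, ω.2.1))
        = l * CMI p₁ (fun ω => ω.2.2.1) (fun ω => ω.2.2.2.2.2) (fun ω => (ω.1, ω.2.1)) + m * CMI p₂ (fun ω => ω.2.2.1) (fun ω => ω.2.2.2.2.2) (fun ω => (ω.1, ω.2.1)) :=
      CMI_mix_eq hpmix hp₁s hp₂s (fun ω => ω.2.2.1) (fun ω => ω.2.2.2.2.2) (fun ω => (ω.1, ω.2.1)) (fun ω => ω.2.2.1) (fun ω => ω.2.2.2.2.2) (fun ω => (ω.1, ω.2.1)) (fun ω => ω.2.2.1) (fun ω => ω.2.2.2.2.2) (fun ω => (ω.1, ω.2.1))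
        (Fin.castAdd_injective kV₁ kV₂) Function.injective_id ((Fin.castAdd_injective kW₁ kW₂).prodMap (Fin.castAdd_injective kU₁ kU₂))
        (natAdd_injective kV₁ kV₂) Function.injective_id ((natAdd_injective kW₁ kW₂).prodMap (natAdd_injective kU₁ kU₂))
        (fun ω => rfl) (fun ω => rfl) (fun ω => rfl)
        (fun ω => rfl) (fun ω => rfl) (fun ω => rfl)
        (fun ω₁ ω₂ h => castAdd_ne_natAdd _ _ (congrArg Prod.fst h))
    have EV1WU : CMI p (fun ω => ω.2.2.1) (fun ω => ω.2.2.2.2.1) (fun ω => (ω.1, ω.2.1))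
        = l * CMI p₁ (fun ω => ω.2.2.1) (fun ω => ω.2.2.2.2.1) (fun ω => (ω.1, ω.2.1)) + m * CMI p₂ (fun ω => ω.2.2.1) (fun ω => ω.2.2.2.2.1) (fun ω => (ω.1, ω.2.1)) :=
      CMI_mix_eq hpmix hp₁s hp₂s (fun ω => ω.2.2.1) (fun ω => ω.2.2.2.2.1) (fun ω => (ω.1, ω.2.1)) (fun ω => ω.2.2.1) (fun ω => ω.2.2.2.2.1) (fun ω => (ω.1, ω.2.1)) (fun ω => ω.2.2.1) (fun ω => ω.2.2.2.2.1) (fun ω => (ω.1, ω.2.1))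
        (Fin.castAdd_injective kV₁ kV₂) Function.injective_id ((Fin.castAdd_injective kW₁ kW₂).prodMap (Fin.castAdd_injective kU₁ kU₂))
        (natAdd_injective kV₁ kV₂) Function.injective_id ((natAdd_injective kW₁ kW₂).prodMap (natAdd_injective kU₁ kU₂))
        (fun ω => rfl) (fun ω => rfl) (fun ω => rfl)
        (fun ω => rfl) (fun ω => rfl) (fun ω => rfl)
        (fun ω₁ ω₂ h => castAdd_ne_natAdd _ _ (congrArg Prod.fst h))
    have EV2W : CMI p (fun ω => ω.2.2.1) (fun ω => ω.2.2.2.2.2) (fun ω => ω.1)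
        = l * CMI p₁ (fun ω => ω.2.2.1) (fun ω => ω.2.2.2.2.2) (fun ω => ω.1) + m * CMI p₂ (fun ω => ω.2.2.1) (fun ω => ω.2.2.2.2.2) (fun ω => ω.1) :=
      CMI_mix_eq hpmix hp₁s hp₂s (fun ω => ω.2.2.1) (fun ω => ω.2.2.2.2.2) (fun ω => ω.1) (fun ω => ω.2.2.1) (fun ω => ω.2.2.2.2.2) (fun ω => ω.1) (fun ω => ω.2.2.1) (fun ω => ω.2.2.2.2.2) (fun ω => ω.1)
        (Fin.castAdd_injective kV₁ kV₂) Function.injective_id (Fin.castAdd_injective kW₁ kW₂)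
        (natAdd_injective kV₁ kV₂) Function.injective_id (natAdd_injective kW₁ kW₂)
        (fun ω => rfl) (fun ω => rfl) (fun ω => rfl)
        (fun ω => rfl) (fun ω => rfl) (fun ω => rfl)
        (fun ω₁ ω₂ h => castAdd_ne_natAdd _ _ h)
    have EV1W : CMI p (fun ω => ω.2.2.1) (fun ω => ω.2.2.2.2.1) (fun ω => ω.1)
        = l * CMI p₁ (fun ω => ω.2.2.1) (fun ω => ω.2.2.2.2.1) (fun ω => ω.1) + m * CMI p₂ (fun ω => ω.2.2.1) (fun ω => ω.2.2.2.2.1) (fun ω => ω.1) :=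
      CMI_mix_eq hpmix hp₁s hp₂s (fun ω => ω.2.2.1) (fun ω => ω.2.2.2.2.1) (fun ω => ω.1) (fun ω => ω.2.2.1) (fun ω => ω.2.2.2.2.1) (fun ω => ω.1) (fun ω => ω.2.2.1) (fun ω => ω.2.2.2.2.1) (fun ω => ω.1)
        (Fin.castAdd_injective kV₁ kV₂) Function.injective_id (Fin.castAdd_injective kW₁ kW₂)
        (natAdd_injective kV₁ kV₂) Function.injective_id (natAdd_injective kW₁ kW₂)
        (fun ω => rfl) (fun ω => rfl) (fun ω => rfl)
        (fun ω => rfl) (fun ω => rfl) (fun ω => rfl)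
        (fun ω₁ ω₂ h => castAdd_ne_natAdd _ _ h)
    have hL1' : l * L1 + m * L1 = L1 := by rw [← add_mul, hlm, one_mul]
    have hL2' : l * L2 + m * L2 = L2 := by rw [← add_mul, hlm, one_mul]
    show ((l * a0 + m * b0) ≤ min (MI p (fun ω => ω.1) (fun ω => ω.2.2.2.2.1)) (MI p (fun ω => ω.1) (fun ω => ω.2.2.2.2.2))) ∧
      ((l * a1 + m * b1) ≤ CMI p (fun ω => ω.2.1) (fun ω => ω.2.2.2.2.1) (fun ω => (ω.1, ω.2.2.1)) - CMI p (fun ω => ω.2.1) (fun ω => ω.2.2.2.2.2) (fun ω => (ω.1, ω.2.2.1)) + L1) ∧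
      ((l * a1 + m * b1) ≤ CMI p (fun ω => ω.2.1) (fun ω => ω.2.2.2.2.1) (fun ω => ω.1) - CMI p (fun ω => ω.2.1) (fun ω => ω.2.2.2.2.2) (fun ω => ω.1) + L1) ∧
      ((l * a0 + m * b0) + (l * a1 + m * b1) ≤ CMI p (fun ω => ω.2.1) (fun ω => ω.2.2.2.2.1) (fun ω => ω.1) + min (MI p (fun ω => ω.1) (fun ω => ω.2.2.2.2.1)) (MI p (fun ω => ω.1) (fun ω => ω.2.2.2.2.2))) ∧
      ((l * a2 + m * b2) ≤ CMI p (fun ω => ω.2.2.1) (fun ω => ω.2.2.2.2.2) (fun ω => (ω.1, ω.2.1)) - CMI p (fun ω => ω.2.2.1) (fun ω => ω.2.2.2.2.1) (fun ω => (ω.1, ω.2.1)) + L2) ∧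
      ((l * a2 + m * b2) ≤ CMI p (fun ω => ω.2.2.1) (fun ω => ω.2.2.2.2.2) (fun ω => ω.1) - CMI p (fun ω => ω.2.2.1) (fun ω => ω.2.2.2.2.1) (fun ω => ω.1) + L2) ∧
      ((l * a0 + m * b0) + (l * a2 + m * b2) ≤ CMI p (fun ω => ω.2.2.1) (fun ω => ω.2.2.2.2.2) (fun ω => ω.1) + min (MI p (fun ω => ω.1) (fun ω => ω.2.2.2.2.1)) (MI p (fun ω => ω.1) (fun ω => ω.2.2.2.2.2))) ∧
      ((l * a0 + m * b0) + (l * a1 + m * b1) + (l * a2 + m * b2) ≤ CMI p (fun ω => ω.2.1) (fun ω => ω.2.2.2.2.1) (fun ω => (ω.1, ω.2.2.1)) + CMI p (fun ω => ω.2.2.1) (fun ω => ω.2.2.2.2.2) (fun ω => ω.1) + min (MI p (fun ω => ω.1) (fun ω => ω.2.2.2.2.1)) (MI p (fun ω => ω.1) (fun ω => ω.2.2.2.2.2))) ∧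
      ((l * a0 + m * b0) + (l * a1 + m * b1) + (l * a2 + m * b2) ≤ CMI p (fun ω => ω.2.1) (fun ω => ω.2.2.2.2.1) (fun ω => ω.1) + CMI p (fun ω => ω.2.2.1) (fun ω => ω.2.2.2.2.2) (fun ω => (ω.1, ω.2.1)) + min (MI p (fun ω => ω.1) (fun ω => ω.2.2.2.2.1)) (MI p (fun ω => ω.1) (fun ω => ω.2.2.2.2.2)))
    refine ⟨?_, ?_, ?_, ?_, ?_, ?_, ?_, ?_, ?_⟩
    · linarith [mul_le_mul_of_nonneg_left h₁0 hl, mul_le_mul_of_nonneg_left h₂0 hm, hminle]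
    · linarith [mul_le_mul_of_nonneg_left h₁1a hl, mul_le_mul_of_nonneg_left h₂1a hm,
        EU1WV, EU2WV, hL1']
    · linarith [mul_le_mul_of_nonneg_left h₁1b hl, mul_le_mul_of_nonneg_left h₂1b hm,
        EU1W, EU2W, hL1']
    · linarith [mul_le_mul_of_nonneg_left h₁01 hl, mul_le_mul_of_nonneg_left h₂01 hm,
        EU1W, hminle]
    · linarith [mul_le_mul_of_nonneg_left h₁2a hl, mul_le_mul_of_nonneg_left h₂2a hm,
        EV2WU, EV1WU, hL2']
    · linarith [mul_le_mul_of_nonneg_left h₁2b hl, mul_le_mul_of_nonneg_left h₂2b hm,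
        EV2W, EV1W, hL2']
    · linarith [mul_le_mul_of_nonneg_left h₁02 hl, mul_le_mul_of_nonneg_left h₂02 hm,
        EV2W, hminle]
    · linarith [mul_le_mul_of_nonneg_left h₁s1 hl, mul_le_mul_of_nonneg_left h₂s1 hm,
        EU1WV, EV2W, hminle]
    · linarith [mul_le_mul_of_nonneg_left h₁s2 hl, mul_le_mul_of_nonneg_left h₂s2 hm,
        EU1W, EV2WU, hminle]
  unfold outerRegion
  exact hconv.closure
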